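/- arXiv:2102.01752 — 4 statements merged into one kernel-verified Lean document; each statement's English description precedes it below -/
import Mathlib

section
/- Unbiasedness of the congruence-regularized objective. Under the hypotheses of Theorem 1 (optimal congruent potentials {ψₙ*}; B-smooth differentiable convex ψₙ with differentiable (1/B)-strongly convex conjugates ψ̄ₙ satisfying ∇ψ̄ₙ(∇ψₙ(x)) = x for all x, for some finite B > 0), it holds that Σₙ αₙ ∫ ψₙ dPₙ + ∫ [Σₙ αₙ ψ̄ₙ(y) − ‖y‖²/2]₊ dP̄(y) ≥ Σₙ αₙ ∫ ψₙ* dPₙ; i.e., MultiCorr({αₙ,Pₙ} | {ψₙ}) plus the congruence regularizer R₁^{P̄}({αₙ},{ψ̄ₙ}) = ∫ [Σₙ αₙ ψ̄ₙ(y) − ‖y‖²/2]₊ dP̄(y) is bounded below by MultiCorr({αₙ,Pₙ} | {ψₙ*}). -/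
/-!
By Fenchel–Young, `ψ̄ₙ(y) ≥ ⟪x, y⟫ - ψₙ(x)`, with equality for the optimal pair at
`y = ∇ψₙ*(x)`; hence `ψₙ(x) - ψₙ*(x) ≥ ψ̄ₙ*(y) - ψ̄ₙ(y)` there. Since `∇ψₙ*` pushes `Pₙ` to `P̄`
and is inverted by `∇ψ̄ₙ*`, the gap `∫ ψₙ - ∫ ψₙ*` is an integral over `P̄` of a function
dominating `ψ̄ₙ* - ψ̄ₙ`. Averaging with the weights `αₙ` and using congruence
`∑ αₙ ψ̄ₙ* = ‖y‖²/2`, that average dominates `‖y‖²/2 - ∑ αₙ ψ̄ₙ ≥ -[∑ αₙ ψ̄ₙ - ‖y‖²/2]₊`.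
-/

open MeasureTheory RealInnerProductSpace

theorem ConvexOn.hasFDerivAt_le_sub {E : Type*} [NormedAddCommGroup E] [NormedSpace ℝ E]
    {f : E → ℝ} {f' : E →L[ℝ] ℝ} {x : E} (hf : ConvexOn ℝ Set.univ f) (hx : HasFDerivAt f f' x)
    (y : E) : f' (y - x) ≤ f y - f x := by
  have hline : HasDerivAt (fun t : ℝ => f (AffineMap.lineMap x y t)) (f' (y - x)) 0 := by
    have := hx.comp_hasDerivAt_of_eq (0 : ℝ)
      (AffineMap.hasDerivAt_lineMap (a := x) (b := y) (x := 0)) (by simp)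
    simpa [Function.comp_def] using this
  have hconv := hf.comp_affineMap (AffineMap.lineMap x y : ℝ →ᵃ[ℝ] E)
  simpa [slope_def_field] using
    hconv.le_slope_of_hasDerivAt (Set.mem_univ 0) (Set.mem_univ 1) one_pos hline

section Conjugate

variable {F : Type*} [NormedAddCommGroup F] [InnerProductSpace ℝ F] [CompleteSpace F]

theorem ConvexOn.inner_sub_le_sub_of_hasGradientAt {f : F → ℝ} {g x : F}
    (hf : ConvexOn ℝ Set.univ f) (hx : HasGradientAt f g x) (y : F) :
    ⟪g, y - x⟫ ≤ f y - f x := by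
  simpa using hf.hasFDerivAt_le_sub hx.hasFDerivAt y

theorem ConvexOn.conjugate_eq_of_hasGradientAt {f : F → ℝ} {fc : F → ℝ} {g x : F}
    (hf : ConvexOn ℝ Set.univ f) (hx : HasGradientAt f g x)
    (hfc : IsLUB (Set.range fun z => ⟪z, g⟫ - f z) (fc g)) :
    fc g = ⟪x, g⟫ - f x := by
  refine le_antisymm (hfc.2 ?_) (hfc.1 ⟨x, rfl⟩)
  rintro _ ⟨z, rfl⟩
  have := hf.inner_sub_le_sub_of_hasGradientAt hx z
  rw [inner_sub_right] at this
  change ⟪z, g⟫ - f z ≤ _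
  rw [real_inner_comm g z, real_inner_comm g x]
  linarith

theorem ConvexOn.conjugate_sub_le_of_hasGradientAt {f h fc hc : F → ℝ} {g x : F}
    (hf : ConvexOn ℝ Set.univ f) (hx : HasGradientAt f g x)
    (hfc : IsLUB (Set.range fun z => ⟪z, g⟫ - f z) (fc g))
    (hhc : ⟪x, g⟫ - h x ≤ hc g) :
    fc g - hc g ≤ h x - f x := by
  rw [hf.conjugate_eq_of_hasGradientAt hx hfc]
  linarith

theorem measurable_gradient [MeasurableSpace F] [BorelSpace F] (f : F → ℝ) :
    Measurable (gradient f) :=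
  (InnerProductSpace.toDual ℝ F).symm.continuous.measurable.comp (measurable_fderiv ℝ f)

end Conjugate

section LeftInverse

variable {α β : Type*} [MeasurableSpace α] [MeasurableSpace β] {μ : Measure α}
  {T : α → β} {S : β → α}

theorem integral_map_comp_of_leftInverse (hT : Measurable T) (hS : Measurable S)
    (hST : Function.LeftInverse S T) {g : α → ℝ} (hg : Measurable g) :
    ∫ y, g (S y) ∂(μ.map T) = ∫ x, g x ∂μ := by
  rw [integral_map (f := fun y => g (S y)) hT.aemeasurable (hg.comp hS).aestronglyMeasurable]
  simp only [hST _]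

theorem integrable_map_comp_of_leftInverse (hT : Measurable T) (hS : Measurable S)
    (hST : Function.LeftInverse S T) {g : α → ℝ} (hg : Measurable g) (hgi : Integrable g μ) :
    Integrable (fun y => g (S y)) (μ.map T) := by
  rw [integrable_map_measure (g := fun y => g (S y)) (hg.comp hS).aestronglyMeasurable
    hT.aemeasurable]
  simpa only [Function.comp_def, hST _] using hgi

end LeftInverse

theorem sum_mul_add_max_nonneg_of_sub_le {ι : Type*} (s : Finset ι) {α a b r : ι → ℝ} {c : ℝ}
    (hα : ∀ i ∈ s, 0 ≤ α i) (hab : ∀ i ∈ s, a i - b i ≤ r i) (ha : ∑ i ∈ s, α i * a i = c) :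
    0 ≤ ∑ i ∈ s, α i * r i + max (∑ i ∈ s, α i * b i - c) 0 := by
  have hsum : c - ∑ i ∈ s, α i * b i ≤ ∑ i ∈ s, α i * r i := by
    rw [← ha, ← Finset.sum_sub_distrib]
    exact Finset.sum_le_sum fun i hi => by
      rw [← mul_sub]; exact mul_le_mul_of_nonneg_left (hab i hi) (hα i hi)
  linarith [le_max_left (∑ i ∈ s, α i * b i - c) 0]

theorem congruence_regularized_objective_unbiased_general {D N : ℕ}
    (P : Fin N → Measure (EuclideanSpace ℝ (Fin D)))
    (Pbar : Measure (EuclideanSpace ℝ (Fin D)))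
    (α : Fin N → ℝ) (hα : ∀ n, 0 < α n)
    -- optimal congruent potentials ψₙ* with conjugates ψ̄ₙ*
    (ψs ψbs : Fin N → EuclideanSpace ℝ (Fin D) → ℝ)
    (hψs_conv : ∀ n, ConvexOn ℝ Set.univ (ψs n))
    (hψs_diff : ∀ n, Differentiable ℝ (ψs n))
    (hψbs_diff : ∀ n, Differentiable ℝ (ψbs n))
    (hψbs_conj : ∀ n y, IsLUB (Set.range fun x => ⟪x, y⟫ - ψs n x) (ψbs n y))
    (hpush : ∀ n, (P n).map (gradient (ψs n)) = Pbar)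
    (hsinv : ∀ n x, gradient (ψbs n) (gradient (ψs n) x) = x)
    (hcong : ∀ y, ∑ n, α n * ψbs n y = ‖y‖ ^ 2 / 2)
    -- candidate potentials ψₙ with conjugates ψ̄ₙ
    (ψ ψb : Fin N → EuclideanSpace ℝ (Fin D) → ℝ)
    (hψ_diff : ∀ n, Differentiable ℝ (ψ n))
    (hψb_diff : ∀ n, Differentiable ℝ (ψb n))
    (hψb_conj : ∀ n y, IsLUB (Set.range fun x => ⟪x, y⟫ - ψ n x) (ψb n y))
    -- integrability of the stated integrals
    (hint1 : ∀ n, Integrable (ψ n) (P n))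
    (hint2 : ∀ n, Integrable (ψs n) (P n))
    (hint3 : Integrable (fun y => max (∑ n, α n * ψb n y - ‖y‖ ^ 2 / 2) 0) Pbar) :
    (∑ n, α n * ∫ x, ψ n x ∂(P n)) +
        ∫ y, max (∑ n, α n * ψb n y - ‖y‖ ^ 2 / 2) 0 ∂Pbar ≥
      ∑ n, α n * ∫ x, ψs n x ∂(P n) := by
  -- unlike `ψ̄ₙ* - ψ̄ₙ`, this transported gap is known to be integrable
  set r : Fin N → EuclideanSpace ℝ (Fin D) → ℝ := fun n y =>
    ψ n (gradient (ψbs n) y) - ψs n (gradient (ψbs n) y) with hr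
  have hgap_meas n : Measurable fun x => ψ n x - ψs n x :=
    ((hψ_diff n).continuous.sub (hψs_diff n).continuous).measurable
  have hr_int n : Integrable (r n) Pbar := hpush n ▸
    integrable_map_comp_of_leftInverse (measurable_gradient _) (measurable_gradient _) (hsinv n)
      (hgap_meas n) ((hint1 n).sub (hint2 n))
  have hr_integral n : ∫ y, r n y ∂Pbar = ∫ x, ψ n x ∂(P n) - ∫ x, ψs n x ∂(P n) := by
    rw [← integral_sub (hint1 n) (hint2 n), ← hpush n]
    exact integral_map_comp_of_leftInverse (measurable_gradient _) (measurable_gradient _)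
      (hsinv n) (hgap_meas n)
  have hr_ge : ∀ᵐ y ∂Pbar, ∀ n, ψbs n y - ψb n y ≤ r n y := ae_all_iff.2 fun n => by
    have hset : MeasurableSet {y | ψbs n y - ψb n y ≤ r n y} :=
      measurableSet_le ((hψbs_diff n).continuous.sub (hψb_diff n).continuous).measurable
        ((hgap_meas n).comp (measurable_gradient _))
    rw [← hpush n, ae_map_iff (measurable_gradient _).aemeasurable hset]
    refine .of_forall fun x => ?_
    simpa only [hr, hsinv n x] using (hψs_conv n).conjugate_sub_le_of_hasGradientAt
      (hψs_diff n x).hasGradientAt (hψbs_conj n _) ((hψb_conj n _).1 ⟨x, rfl⟩)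
  have hnonneg : 0 ≤ ∫ y, (∑ n, α n * r n y) + max (∑ n, α n * ψb n y - ‖y‖ ^ 2 / 2) 0 ∂Pbar :=
    integral_nonneg_of_ae <| hr_ge.mono fun y hy =>
      sum_mul_add_max_nonneg_of_sub_le _ (fun n _ => (hα n).le) (fun n _ => hy n) (hcong y)
  rw [integral_add (integrable_finsetSum _ fun n _ => (hr_int n).const_mul _) hint3,
    integral_finsetSum _ fun n _ => (hr_int n).const_mul _] at hnonneg
  simp only [integral_const_mul, hr_integral, mul_sub, Finset.sum_sub_distrib] at hnonneg
  linarith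

/-- Unbiasedness of the congruence-regularized objective. Under the hypotheses
of Theorem 1, `MultiCorr({αₙ,Pₙ} | {ψₙ})` plus the congruence regularizer
`∫ [Σₙ αₙ ψ̄ₙ(y) − ‖y‖²/2]₊ dP̄` is bounded below by
`MultiCorr({αₙ,Pₙ} | {ψₙ*})`. -/
theorem congruence_regularized_objective_unbiased {D N : ℕ}
    (P : Fin N → Measure (EuclideanSpace ℝ (Fin D)))
    (Pbar : Measure (EuclideanSpace ℝ (Fin D)))
    [∀ n, IsProbabilityMeasure (P n)] [IsProbabilityMeasure Pbar]
    (α : Fin N → ℝ) (hα : ∀ n, 0 < α n) (hαsum : ∑ n, α n = 1)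
    -- optimal congruent potentials ψₙ* with conjugates ψ̄ₙ*
    (ψs ψbs : Fin N → EuclideanSpace ℝ (Fin D) → ℝ)
    (hψs_conv : ∀ n, ConvexOn ℝ Set.univ (ψs n))
    (hψs_diff : ∀ n, Differentiable ℝ (ψs n))
    (hψbs_diff : ∀ n, Differentiable ℝ (ψbs n))
    (hψbs_conj : ∀ n y, IsLUB (Set.range fun x => ⟪x, y⟫ - ψs n x) (ψbs n y))
    (hpush : ∀ n, (P n).map (gradient (ψs n)) = Pbar)
    (hsinv : ∀ n x, gradient (ψbs n) (gradient (ψs n) x) = x)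
    (hcong : ∀ y, ∑ n, α n * ψbs n y = ‖y‖ ^ 2 / 2)
    (hcongGrad : ∀ y, ∑ n, α n • gradient (ψbs n) y = y)
    -- candidate potentials ψₙ with conjugates ψ̄ₙ
    (B : ℝ) (hB : 0 < B)
    (ψ ψb : Fin N → EuclideanSpace ℝ (Fin D) → ℝ)
    (hψ_conv : ∀ n, ConvexOn ℝ Set.univ (ψ n))
    (hψ_diff : ∀ n, Differentiable ℝ (ψ n))
    (hψ_smooth : ∀ n x y, ‖gradient (ψ n) x - gradient (ψ n) y‖ ≤ B * ‖x - y‖)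
    (hψb_diff : ∀ n, Differentiable ℝ (ψb n))
    (hψb_conj : ∀ n y, IsLUB (Set.range fun x => ⟪x, y⟫ - ψ n x) (ψb n y))
    (hψb_sconv : ∀ n, ConvexOn ℝ Set.univ (fun y => ψb n y - (1 / B) / 2 * ‖y‖ ^ 2))
    (hψb_inv : ∀ n x, gradient (ψb n) (gradient (ψ n) x) = x)
    -- integrability of the stated integrals
    (hint1 : ∀ n, Integrable (ψ n) (P n))
    (hint2 : ∀ n, Integrable (ψs n) (P n))
    (hint3 : Integrable (fun y => max (∑ n, α n * ψb n y - ‖y‖ ^ 2 / 2) 0) Pbar) :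
    (∑ n, α n * ∫ x, ψ n x ∂(P n)) +
        ∫ y, max (∑ n, α n * ψb n y - ‖y‖ ^ 2 / 2) 0 ∂Pbar ≥
      ∑ n, α n * ∫ x, ψs n x ∂(P n) :=
  congruence_regularized_objective_unbiased_general P Pbar α hα ψs ψbs hψs_conv hψs_diff hψbs_diff
    hψbs_conj hpush hsinv hcong ψ ψb hψ_diff hψb_diff hψb_conj hint1 hint2 hint3
end

section
/- Theorem 2, part 1 (multiple correlations upper bound, inequality (10)). Let {ψₙ*} be optimal congruent potentials for (P₁,…,P_N; α₁,…,α_N; P̄). Let τ ≥ 1 and P̂ be a Borel probability measure with P̄(A) ≤ τ·P̂(A) for every Borel set A. For each n, let ψₙ† : ℝ^D → ℝ be differentiable convex, and let ψ̄ₙ‡ : ℝ^D → ℝ be β-strongly convex and B-smooth differentiable convex (0 < β ≤ B < ∞) with differentiable convex conjugate ψₙ‡ satisfying ∇ψ̄ₙ‡(∇ψₙ‡(x)) = x and ∇ψₙ‡(∇ψ̄ₙ‡(y)) = y for all x, y (in particular ∇ψₙ‡ is (1/β)-Lipschitz). Let λ > B/(2β²). Define the regularized objective M = Σₙ αₙ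 ∫ [⟨x, ∇ψₙ†(x)⟩ − ψ̄ₙ‡(∇ψₙ†(x))] dPₙ(x) + τ · ∫ [Σₙ αₙ ψ̄ₙ‡(y) − ‖y‖²/2]₊ dP̂(y) + λ · Σₙ αₙ ∫ ‖∇ψ̄ₙ‡(∇ψₙ†(x)) − x‖² dPₙ(x). Then M ≥ Σₙ αₙ ∫ ψₙ* dPₙ. -/
open MeasureTheory RealInnerProductSpace

/-!
Write `qₙ = ψ̄ₙ‡ - ψ̄ₙ*`. At a point `x`, the Fenchel equality `ψₙ*(x) = ⟪x, y⟫ - ψ̄ₙ*(y)` for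
`y = ∇ψₙ*(x)`, the `β`-strong convexity of `ψ̄ₙ‡` at `∇ψₙ†(x)` and AM-GM (using `2βλ ≥ 1`, which
follows from `λ > B / (2β²)` and `β ≤ B`) give
`ψₙ*(x) ≤ ⟪x, ∇ψₙ†(x)⟫ - ψ̄ₙ‡(∇ψₙ†(x)) + λ‖∇ψ̄ₙ‡(∇ψₙ†(x)) - x‖² + qₙ(∇ψₙ*(x))`.
Integrate against `Pₙ`, push `qₙ` forward to `P̄` and sum with weights `αₙ`: by congruence
`Σ αₙ qₙ = Σ αₙ ψ̄ₙ‡ - ‖·‖²/2 ≤ [·]₊`, and the `P̄`-integral of the positive part is at most `τ`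
times its `P̂`-integral. The same two bounds, the pointwise one from below and the weighted sum
from above, make every `qₙ` integrable under `P̄`.
-/

open Set

section ConvexAnalysis

variable {E : Type*} [NormedAddCommGroup E] [InnerProductSpace ℝ E] [CompleteSpace E]

theorem ConvexOn.add_inner_gradient_le {f : E → ℝ} (hf : ConvexOn ℝ univ f)
    (hd : Differentiable ℝ f) (x y : E) : f x + ⟪gradient f x, y - x⟫ ≤ f y := by
  set L : ℝ →ᵃ[ℝ] E := AffineMap.lineMap x y
  have hφ : HasDerivAt (f ∘ L) ⟪gradient f x, y - x⟫ 0 := by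
    have := (hd x).hasGradientAt.hasFDerivAt.comp_hasDerivAt_of_eq 0
      AffineMap.hasDerivAt_lineMap (AffineMap.lineMap_apply_zero x y).symm
    simpa using this
  have := (hf.comp_affineMap L).le_slope_of_hasDerivAt
    (mem_univ 0) (mem_univ 1) one_pos hφ
  simp only [slope_def_field, Function.comp_apply, L, AffineMap.lineMap_apply_zero,
    AffineMap.lineMap_apply_one, sub_zero, div_one] at this
  linarith

theorem hasGradientAt_half_mul_norm_sq (c : ℝ) (x : E) :
    HasGradientAt (fun y : E => c / 2 * ‖y‖ ^ 2) (c • x) x := by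
  rw [hasGradientAt_iff_hasFDerivAt]
  refine ((hasStrictFDerivAt_norm_sq x).hasFDerivAt.const_mul (c / 2)).congr_fderiv ?_
  ext v
  simp
  ring

theorem ConvexOn.add_inner_gradient_add_sq_le {f : E → ℝ} {β : ℝ}
    (hf : ConvexOn ℝ univ (fun y => f y - β / 2 * ‖y‖ ^ 2)) (hd : Differentiable ℝ f)
    (x y : E) : f x + ⟪gradient f x, y - x⟫ + β / 2 * ‖y - x‖ ^ 2 ≤ f y := by
  have hgrad : ∀ z, HasGradientAt (fun y => f y - β / 2 * ‖y‖ ^ 2) (gradient f z - β • z) z :=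
    fun z => by
      rw [hasGradientAt_iff_hasFDerivAt, map_sub]
      exact (hd z).hasGradientAt.hasFDerivAt.sub (hasGradientAt_half_mul_norm_sq β z).hasFDerivAt
  have := hf.add_inner_gradient_le (fun z => (hgrad z).differentiableAt) x y
  rw [(hgrad x).gradient, inner_sub_left, real_inner_smul_left, inner_sub_right x,
    real_inner_self_eq_norm_sq] at this
  rw [norm_sub_sq_real, real_inner_comm x y]
  linarith

theorem ConvexOn.isGreatest_inner_sub_gradient {f : E → ℝ} (hf : ConvexOn ℝ univ f)
    (hd : Differentiable ℝ f) (x : E) :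
    IsGreatest (range fun z => ⟪z, gradient f x⟫ - f z) (⟪x, gradient f x⟫ - f x) := by
  refine ⟨⟨x, rfl⟩, ?_⟩
  rintro _ ⟨z, rfl⟩
  have := hf.add_inner_gradient_le hd x z
  rw [inner_sub_right, real_inner_comm x, real_inner_comm z] at this
  dsimp only
  linarith

theorem inner_sub_le_inner_sub_add_sq_of_strongly_convex {g : E → ℝ} {β lam : ℝ}
    (hβ : 0 < β) (hlam : 1 ≤ 2 * β * lam)
    (hg : ConvexOn ℝ univ (fun y => g y - β / 2 * ‖y‖ ^ 2)) (hd : Differentiable ℝ g)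
    (x y z : E) : ⟪x, z⟫ - g z ≤ ⟪x, y⟫ - g y + lam * ‖gradient g y - x‖ ^ 2 := by
  have hsc := hg.add_inner_gradient_add_sq_le hd y z
  have hcs : ⟪x - gradient g y, z - y⟫ ≤ ‖gradient g y - x‖ * ‖z - y‖ := by
    rw [← norm_neg, neg_sub]
    exact real_inner_le_norm _ _
  -- AM-GM: `a b ≤ a² / (2β) + β b² / 2 ≤ λ a² + β b² / 2`
  have hamgm : ‖gradient g y - x‖ * ‖z - y‖
      ≤ lam * ‖gradient g y - x‖ ^ 2 + β / 2 * ‖z - y‖ ^ 2 := by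
    nlinarith [sq_nonneg (‖gradient g y - x‖ - β * ‖z - y‖),
      mul_nonneg (sub_nonneg.mpr hlam) (sq_nonneg ‖gradient g y - x‖)]
  rw [inner_sub_left, inner_sub_right, inner_sub_right] at hcs
  rw [inner_sub_right] at hsc
  linarith

theorem ConvexOn.le_inner_sub_add_sq_add_sub_conj {f fconj g : E → ℝ} {β lam : ℝ}
    (hf : ConvexOn ℝ univ f) (hfd : Differentiable ℝ f) (x y : E)
    (hconj : IsLUB (range fun z => ⟪z, gradient f x⟫ - f z) (fconj (gradient f x)))
    (hβ : 0 < β) (hlam : 1 ≤ 2 * β * lam)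
    (hg : ConvexOn ℝ univ (fun y => g y - β / 2 * ‖y‖ ^ 2)) (hgd : Differentiable ℝ g) :
    f x ≤ (⟪x, y⟫ - g y + lam * ‖gradient g y - x‖ ^ 2)
      + (g (gradient f x) - fconj (gradient f x)) := by
  have hfenchel := hconj.unique (hf.isGreatest_inner_sub_gradient hfd x).isLUB
  have := inner_sub_le_inner_sub_add_sq_of_strongly_convex hβ hlam hg hgd x y (gradient f x)
  linarith

end ConvexAnalysis

theorem measurable_gradient_s4 {E : Type*} [NormedAddCommGroup E] [InnerProductSpace ℝ E]
    [CompleteSpace E] [MeasurableSpace E] [BorelSpace E] (f : E → ℝ) :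
    Measurable (gradient f) :=
  (InnerProductSpace.toDual ℝ E).symm.continuous.measurable.comp (measurable_fderiv ℝ f)

section Integration

variable {X Y ι : Type*} [MeasurableSpace X] [MeasurableSpace Y] [Fintype ι]

theorem integral_le_toReal_mul_of_le_smul {μ ν : Measure X} {c : ENNReal} (hc : c ≠ ⊤)
    (hμν : μ ≤ c • ν) {f : X → ℝ} (hf : ∀ᵐ x ∂ν, 0 ≤ f x) (hfi : Integrable f ν) :
    ∫ x, f x ∂μ ≤ c.toReal * ∫ x, f x ∂ν := by
  rw [← smul_eq_mul, ← integral_smul_measure]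
  exact integral_mono_measure hμν (Measure.ae_smul_measure hf c) (hfi.smul_measure hc)

theorem integrable_of_ae_le_of_ae_sum_le {μ : Measure X} {α : ι → ℝ} {g l : ι → X → ℝ}
    {h : X → ℝ} (hα : ∀ i, 0 < α i) (hg : ∀ i, AEStronglyMeasurable (g i) μ)
    (hl : ∀ i, Integrable (l i) μ) (hh : Integrable h μ) (hlg : ∀ i, l i ≤ᵐ[μ] g i)
    (hgh : ∀ᵐ x ∂μ, ∑ i, α i * g i x ≤ h x) (i : ι) : Integrable (g i) μ := by
  refine integrable_of_le_of_le (hg i) (hlg i)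
    (g₂ := fun x => l i x + (α i)⁻¹ * (h x - ∑ j, α j * l j x)) ?_ (hl i) ?_
  · filter_upwards [ae_all_iff.2 hlg, hgh] with x hlgx hghx
    have hi : α i * (g i x - l i x) ≤ ∑ j, α j * (g j x - l j x) :=
      Finset.single_le_sum (f := fun j => α j * (g j x - l j x))
        (fun j _ => mul_nonneg (hα j).le (sub_nonneg.2 (hlgx j))) (Finset.mem_univ i)
    simp only [mul_sub, Finset.sum_sub_distrib] at hi
    rw [← sub_le_iff_le_add', le_inv_mul_iff₀ (hα i), mul_sub]
    linarith
  · exact (hl i).add ((hh.sub (integrable_finsetSum _ fun j _ => (hl j).const_mul _)).const_mul _)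

variable {μ : Measure X} {ν : Measure Y} {T : X → Y} {q : Y → ℝ} {f F : X → ℝ}

theorem integrable_min_zero_of_le_add_comp (hT : AEMeasurable T μ) (hTν : μ.map T = ν)
    (hq : AEStronglyMeasurable q ν) (hf : Integrable f μ) (hF : Integrable F μ)
    (hfF : ∀ᵐ x ∂μ, f x ≤ F x + q (T x)) : Integrable (fun y => min (q y) 0) ν := by
  subst hTν
  have hqmin : AEStronglyMeasurable (fun y => min (q y) 0) (μ.map T) :=
    hq.inf aestronglyMeasurable_const
  refine (integrable_map_measure hqmin hT).2 ?_
  refine integrable_of_le_of_le (hqmin.comp_aemeasurable hT) ?_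
    (ae_of_all _ fun x => min_le_right _ 0) ((hf.sub hF).inf (integrable_zero _ _ μ))
    (integrable_zero _ _ μ)
  filter_upwards [hfF] with x hx
  exact min_le_min_right 0 (by simp only [Pi.sub_apply]; linarith)

theorem integral_le_add_integral_of_le_add_comp (hT : AEMeasurable T μ) (hTν : μ.map T = ν)
    (hq : Integrable q ν) (hf : Integrable f μ) (hF : Integrable F μ)
    (hfF : ∀ᵐ x ∂μ, f x ≤ F x + q (T x)) : ∫ x, f x ∂μ ≤ ∫ x, F x ∂μ + ∫ y, q y ∂ν := by
  subst hTν
  have hqT : Integrable (fun x => q (T x)) μ := (integrable_map_measure hq.1 hT).1 hq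
  rw [integral_map hT hq.1, ← integral_add hF hqT]
  exact integral_mono_ae hf (hF.add hqT) hfF

theorem sum_integral_le_of_le_add_comp {μ : ι → Measure X} {T : ι → X → Y} {α : ι → ℝ}
    {f F : ι → X → ℝ} {q : ι → Y → ℝ} {r : Y → ℝ} (hα : ∀ i, 0 < α i)
    (hT : ∀ i, AEMeasurable (T i) (μ i)) (hTν : ∀ i, (μ i).map (T i) = ν)
    (hq : ∀ i, AEStronglyMeasurable (q i) ν) (hf : ∀ i, Integrable (f i) (μ i))
    (hF : ∀ i, Integrable (F i) (μ i)) (hr : Integrable r ν)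
    (hfF : ∀ i, ∀ᵐ x ∂(μ i), f i x ≤ F i x + q i (T i x))
    (hqr : ∀ᵐ y ∂ν, ∑ i, α i * q i y ≤ r y) :
    ∑ i, α i * ∫ x, f i x ∂(μ i) ≤ ∑ i, α i * ∫ x, F i x ∂(μ i) + ∫ y, r y ∂ν := by
  have hqi : ∀ i, Integrable (q i) ν :=
    integrable_of_ae_le_of_ae_sum_le hα hq
      (fun i => integrable_min_zero_of_le_add_comp (hT i) (hTν i) (hq i) (hf i) (hF i) (hfF i))
      hr (fun i => ae_of_all _ fun y => min_le_left _ 0) hqr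
  calc ∑ i, α i * ∫ x, f i x ∂(μ i)
      ≤ ∑ i, α i * (∫ x, F i x ∂(μ i) + ∫ y, q i y ∂ν) :=
        Finset.sum_le_sum fun i _ => mul_le_mul_of_nonneg_left
          (integral_le_add_integral_of_le_add_comp (hT i) (hTν i) (hqi i) (hf i) (hF i) (hfF i))
          (hα i).le
    _ = ∑ i, α i * ∫ x, F i x ∂(μ i) + ∫ y, ∑ i, α i * q i y ∂ν := by
        rw [integral_finsetSum _ fun i _ => (hqi i).const_mul (α i)]
        simp only [mul_add, Finset.sum_add_distrib, integral_const_mul]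
    _ ≤ ∑ i, α i * ∫ x, F i x ∂(μ i) + ∫ y, r y ∂ν :=
        (add_le_add_iff_left _).2 <|
          integral_mono_ae (integrable_finsetSum _ fun i _ => (hqi i).const_mul (α i)) hr hqr

end Integration

theorem multiple_correlations_upper_bound_general {D N : ℕ}
    (P : Fin N → Measure (EuclideanSpace ℝ (Fin D)))
    (Pbar : Measure (EuclideanSpace ℝ (Fin D)))
    (α : Fin N → ℝ) (hα : ∀ n, 0 < α n)
    -- optimal congruent potentials ψₙ* with conjugates ψ̄ₙ*
    (ψs ψbs : Fin N → EuclideanSpace ℝ (Fin D) → ℝ)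
    (hψs_conv : ∀ n, ConvexOn ℝ Set.univ (ψs n))
    (hψs_diff : ∀ n, Differentiable ℝ (ψs n))
    (hψbs_diff : ∀ n, Differentiable ℝ (ψbs n))
    (hψbs_conj : ∀ n y, IsLUB (Set.range fun x => ⟪x, y⟫ - ψs n x) (ψbs n y))
    (hpush : ∀ n, (P n).map (gradient (ψs n)) = Pbar)
    (hcong : ∀ y, ∑ n, α n * ψbs n y = ‖y‖ ^ 2 / 2)
    -- candidate potentials ψₙ† and ψ̄ₙ‡ with conjugates ψₙ‡
    (β B : ℝ) (hβ : 0 < β) (hβB : β ≤ B)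
    (ψdag ψbd : Fin N → EuclideanSpace ℝ (Fin D) → ℝ)
    (hψbd_diff : ∀ n, Differentiable ℝ (ψbd n))
    (hψbd_sconv : ∀ n, ConvexOn ℝ Set.univ (fun y => ψbd n y - β / 2 * ‖y‖ ^ 2))
    -- regularization parameters
    (lam : ℝ) (hlam : lam > B / (2 * β ^ 2))
    (τ : ℝ) (hτ : 1 ≤ τ)
    (Phat : Measure (EuclideanSpace ℝ (Fin D)))
    (hdom : ∀ A : Set (EuclideanSpace ℝ (Fin D)), MeasurableSet A →
      Pbar A ≤ ENNReal.ofReal τ * Phat A)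
    -- integrability of the stated integrals
    (hintM1 : ∀ n, Integrable
      (fun x => ⟪x, gradient (ψdag n) x⟫ - ψbd n (gradient (ψdag n) x)) (P n))
    (hintM2 : Integrable (fun y => max (∑ n, α n * ψbd n y - ‖y‖ ^ 2 / 2) 0) Phat)
    (hintM3 : ∀ n, Integrable
      (fun x => ‖gradient (ψbd n) (gradient (ψdag n) x) - x‖ ^ 2) (P n))
    (hint_s : ∀ n, Integrable (ψs n) (P n))
    -- the regularized objective
    (M : ℝ)
    (hM : M = (∑ n, α n * ∫ x, (⟪x, gradient (ψdag n) x⟫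
          - ψbd n (gradient (ψdag n) x)) ∂(P n))
      + τ * ∫ y, max (∑ n, α n * ψbd n y - ‖y‖ ^ 2 / 2) 0 ∂Phat
      + lam * ∑ n, α n * ∫ x, ‖gradient (ψbd n) (gradient (ψdag n) x) - x‖ ^ 2 ∂(P n))
    :
    M ≥ ∑ n, α n * ∫ x, ψs n x ∂(P n) := by
  have hβlam : 1 ≤ 2 * β * lam := by
    rw [gt_iff_lt, div_lt_iff₀ (by positivity)] at hlam
    nlinarith
  have hdom' : Pbar ≤ ENNReal.ofReal τ • Phat := Measure.le_iff.2 hdom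
  have hpointwise := fun n x => (hψs_conv n).le_inner_sub_add_sq_add_sub_conj (hψs_diff n) x
    (gradient (ψdag n) x) (hψbs_conj n _) hβ hβlam (hψbd_sconv n) (hψbd_diff n)
  have hcong_le : ∀ y, ∑ n, α n * (ψbd n y - ψbs n y) ≤ max (∑ n, α n * ψbd n y - ‖y‖ ^ 2 / 2) 0 :=
    fun y => by simpa only [mul_sub, Finset.sum_sub_distrib, hcong] using le_max_left _ _
  have hdual := sum_integral_le_of_le_add_comp (q := fun n y => ψbd n y - ψbs n y) hα
    (fun n => (measurable_gradient_s4 (ψs n)).aemeasurable) hpush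
    (fun n => ((hψbd_diff n).continuous.sub (hψbs_diff n).continuous).aestronglyMeasurable)
    hint_s (fun n => (hintM1 n).add ((hintM3 n).const_mul lam))
    ((hintM2.smul_measure ENNReal.ofReal_ne_top).mono_measure hdom')
    (fun n => ae_of_all _ (hpointwise n)) (ae_of_all _ hcong_le)
  have hdom_int := integral_le_toReal_mul_of_le_smul ENNReal.ofReal_ne_top hdom'
    (ae_of_all _ fun y => le_max_right _ _) hintM2
  rw [ENNReal.toReal_ofReal (zero_le_one.trans hτ)] at hdom_int
  simp only [integral_add (hintM1 _) ((hintM3 _).const_mul lam), Pi.add_apply,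
    integral_const_mul, mul_add, Finset.sum_add_distrib, mul_left_comm _ lam,
    ← Finset.mul_sum] at hdual
  linarith

/-- Theorem 2, part 1 (multiple correlations upper bound, inequality (10)):
the regularized objective `M` is at least `Σₙ αₙ ∫ ψₙ* dPₙ`. -/
theorem multiple_correlations_upper_bound {D N : ℕ}
    (P : Fin N → Measure (EuclideanSpace ℝ (Fin D)))
    (Pbar : Measure (EuclideanSpace ℝ (Fin D)))
    [∀ n, IsProbabilityMeasure (P n)] [IsProbabilityMeasure Pbar]
    (α : Fin N → ℝ) (hα : ∀ n, 0 < α n) (hαsum : ∑ n, α n = 1)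
    -- optimal congruent potentials ψₙ* with conjugates ψ̄ₙ*
    (ψs ψbs : Fin N → EuclideanSpace ℝ (Fin D) → ℝ)
    (hψs_conv : ∀ n, ConvexOn ℝ Set.univ (ψs n))
    (hψs_diff : ∀ n, Differentiable ℝ (ψs n))
    (hψbs_diff : ∀ n, Differentiable ℝ (ψbs n))
    (hψbs_conj : ∀ n y, IsLUB (Set.range fun x => ⟪x, y⟫ - ψs n x) (ψbs n y))
    (hpush : ∀ n, (P n).map (gradient (ψs n)) = Pbar)
    (hsinv : ∀ n x, gradient (ψbs n) (gradient (ψs n) x) = x)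
    (hcong : ∀ y, ∑ n, α n * ψbs n y = ‖y‖ ^ 2 / 2)
    (hcongGrad : ∀ y, ∑ n, α n • gradient (ψbs n) y = y)
    -- candidate potentials ψₙ† and ψ̄ₙ‡ with conjugates ψₙ‡
    (β B : ℝ) (hβ : 0 < β) (hβB : β ≤ B)
    (ψdag ψbd ψd : Fin N → EuclideanSpace ℝ (Fin D) → ℝ)
    (hψdag_conv : ∀ n, ConvexOn ℝ Set.univ (ψdag n))
    (hψdag_diff : ∀ n, Differentiable ℝ (ψdag n))
    (hψbd_conv : ∀ n, ConvexOn ℝ Set.univ (ψbd n))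
    (hψbd_diff : ∀ n, Differentiable ℝ (ψbd n))
    (hψbd_sconv : ∀ n, ConvexOn ℝ Set.univ (fun y => ψbd n y - β / 2 * ‖y‖ ^ 2))
    (hψbd_smooth : ∀ n x y, ‖gradient (ψbd n) x - gradient (ψbd n) y‖ ≤ B * ‖x - y‖)
    (hψd_diff : ∀ n, Differentiable ℝ (ψd n))
    (hψd_conj : ∀ n x, IsLUB (Set.range fun y => ⟪y, x⟫ - ψbd n y) (ψd n x))
    (hψd_lip : ∀ n x y, ‖gradient (ψd n) x - gradient (ψd n) y‖ ≤ (1 / β) * ‖x - y‖)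
    (hinv1 : ∀ n x, gradient (ψbd n) (gradient (ψd n) x) = x)
    (hinv2 : ∀ n y, gradient (ψd n) (gradient (ψbd n) y) = y)
    -- regularization parameters
    (lam : ℝ) (hlam : lam > B / (2 * β ^ 2))
    (τ : ℝ) (hτ : 1 ≤ τ)
    (Phat : Measure (EuclideanSpace ℝ (Fin D))) [IsProbabilityMeasure Phat]
    (hdom : ∀ A : Set (EuclideanSpace ℝ (Fin D)), MeasurableSet A →
      Pbar A ≤ ENNReal.ofReal τ * Phat A)
    -- integrability of the stated integrals
    (hintM1 : ∀ n, Integrable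
      (fun x => ⟪x, gradient (ψdag n) x⟫ - ψbd n (gradient (ψdag n) x)) (P n))
    (hintM2 : Integrable (fun y => max (∑ n, α n * ψbd n y - ‖y‖ ^ 2 / 2) 0) Phat)
    (hintM3 : ∀ n, Integrable
      (fun x => ‖gradient (ψbd n) (gradient (ψdag n) x) - x‖ ^ 2) (P n))
    (hint_s : ∀ n, Integrable (ψs n) (P n))
    -- the regularized objective
    (M : ℝ)
    (hM : M = (∑ n, α n * ∫ x, (⟪x, gradient (ψdag n) x⟫
          - ψbd n (gradient (ψdag n) x)) ∂(P n))
      + τ * ∫ y, max (∑ n, α n * ψbd n y - ‖y‖ ^ 2 / 2) 0 ∂Phat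
      + lam * ∑ n, α n * ∫ x, ‖gradient (ψbd n) (gradient (ψdag n) x) - x‖ ^ 2 ∂(P n))
    :
    M ≥ ∑ n, α n * ∫ x, ψs n x ∂(P n) :=
  multiple_correlations_upper_bound_general P Pbar α hα ψs ψbs hψs_conv hψs_diff hψbs_diff hψbs_conj
    hpush hcong β B hβ hβB ψdag ψbd hψbd_diff hψbd_sconv lam hlam τ hτ Phat hdom hintM1 hintM2
    hintM3 hint_s M hM
end

section
/- Integrated cycle-regularized lower bound (inequality (22) of the paper). Let P be a Borel probability measure on ℝ^D. Let ψ̄‡ : ℝ^D → ℝ be differentiable convex, β-strongly convex and B-smooth (0 < β ≤ B < ∞), and let ψ‡ be its differentiable convex conjugate with ∇ψ‡ being (1/β)-Lipschitz and the gradients mutually inverse (∇ψ̄‡∘∇ψ‡ = id = ∇ψ‡∘∇ψ̄‡). Let ψ† : ℝ^D → ℝ be differentiable, and let λ > 0. Assuming all integrands are P-integrable, ∫ [⟨x, ∇ψ†(x)⟩ − ψ̄‡(∇ψ†(x))] dP(x) + λ · ∫ ‖∇ψ̄‡(∇ψ†(x)) − x‖² dP(x) ≥ ∫ ψ‡(x)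 dP(x) + (λ − B/(2β²)) · ∫ ‖∇ψ̄‡(∇ψ†(x)) − x‖² dP(x). -/
/-!
Fix `x`, put `y = ∇ψdag x` and `u = ∇ψbd y`. Strong convexity gives
`ψbd w ≥ ψbd y + ⟪u, w - y⟫ + β/2 ‖w - y‖²`, so every term of the supremum defining `ψd x` obeys
`⟪w, x⟫ - ψbd w ≤ ⟪x, y⟫ - ψbd y + ⟪x - u, w - y⟫ - β/2 ‖w - y‖² ≤ ⟪x, y⟫ - ψbd y + ‖u - x‖²/(2β)`.
As `β ≤ B`, the constant `1/(2β)` is at most `B/(2β²)`, and integrating the pointwise bound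
gives the inequality.
-/

open MeasureTheory RealInnerProductSpace Set

theorem ConvexOn.add_le_of_hasFDerivAt {E : Type*} [NormedAddCommGroup E] [NormedSpace ℝ E]
    {s : Set E} {f : E → ℝ} {f' : E →L[ℝ] ℝ} {y z : E} (hf : ConvexOn ℝ s f)
    (hy : y ∈ s) (hz : z ∈ s) (hf' : HasFDerivAt f f' y) : f y + f' (z - y) ≤ f z := by
  have hline : HasDerivAt (AffineMap.lineMap y z : ℝ →ᵃ[ℝ] E) (z - y) 0 := by
    simpa using AffineMap.hasDerivAt_lineMap (a := y) (b := z) (x := (0 : ℝ))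
  have hslope := (hf.comp_affineMap (AffineMap.lineMap y z)).le_slope_of_hasDerivAt
    (x := 0) (y := 1) (by simpa using hy) (by simpa using hz) one_pos
    ((by simpa using hf' : HasFDerivAt f f' (AffineMap.lineMap y z (0 : ℝ))).comp_hasDerivAt
      0 hline)
  simp only [slope_def_field, map_sub, Function.comp_apply, AffineMap.lineMap_apply_zero,
    AffineMap.lineMap_apply_one, sub_zero, div_one, tsub_le_iff_right] at hslope
  rw [map_sub]
  linarith

theorem StrongConvexOn.add_le_of_hasGradientAt {E : Type*} [NormedAddCommGroup E]
    [InnerProductSpace ℝ E] [CompleteSpace E] {s : Set E} {m : ℝ} {f : E → ℝ} {u y z : E}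
    (hf : StrongConvexOn s m f) (hy : y ∈ s) (hz : z ∈ s) (hu : HasGradientAt f u y) :
    f y + ⟪u, z - y⟫ + m / 2 * ‖z - y‖ ^ 2 ≤ f z := by
  have hderiv :=
    hu.hasFDerivAt.sub ((hasStrictFDerivAt_norm_sq y).hasFDerivAt.const_mul (m / 2))
  have key := (strongConvexOn_iff_convex.mp hf).add_le_of_hasFDerivAt hy hz hderiv
  simp only [sub_apply, smul_apply, InnerProductSpace.toDual_apply_apply, innerSL_apply_apply,
    smul_eq_mul, nsmul_eq_mul, Nat.cast_ofNat, inner_sub_right, real_inner_self_eq_norm_sq] at key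
  rw [inner_sub_right, norm_sub_sq_real, real_inner_comm y z]
  linarith

theorem real_inner_sub_half_mul_norm_sq_le {E : Type*} [NormedAddCommGroup E]
    [InnerProductSpace ℝ E] {m : ℝ} (hm : 0 < m) (a b : E) :
    ⟪a, b⟫ - m / 2 * ‖b‖ ^ 2 ≤ ‖a‖ ^ 2 / (2 * m) := by
  have h := norm_sub_sq_real a (m • b)
  rw [real_inner_smul_right, norm_smul, Real.norm_of_nonneg hm.le] at h
  rw [le_div_iff₀ (by positivity)]
  nlinarith [sq_nonneg ‖a - m • b‖]

theorem StrongConvexOn.conjugate_le_of_isLUB {E : Type*} [NormedAddCommGroup E]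
    [InnerProductSpace ℝ E] [CompleteSpace E] {m : ℝ} {f : E → ℝ} {u x y : E} {c : ℝ}
    (hf : StrongConvexOn univ m f) (hm : 0 < m) (hu : HasGradientAt f u y)
    (hc : IsLUB (range fun w => ⟪w, x⟫ - f w) c) :
    c ≤ ⟪x, y⟫ - f y + ‖u - x‖ ^ 2 / (2 * m) := by
  refine hc.2 (forall_mem_range.mpr fun w => ?_)
  have hlower := hf.add_le_of_hasGradientAt (mem_univ y) (mem_univ w) hu
  have hquad := real_inner_sub_half_mul_norm_sq_le hm (x - u) (w - y)
  rw [inner_sub_left, inner_sub_right, inner_sub_right, norm_sub_rev x u] at hquad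
  rw [inner_sub_right] at hlower
  rw [real_inner_comm x w]
  linarith

theorem integrated_cycle_regularized_lower_bound_general {D : ℕ}
    (P : Measure (EuclideanSpace ℝ (Fin D)))
    (β B : ℝ) (hβ : 0 < β) (hβB : β ≤ B)
    (ψbd ψd ψdag : EuclideanSpace ℝ (Fin D) → ℝ)
    (hψbd_diff : Differentiable ℝ ψbd)
    (hψbd_sconv : ConvexOn ℝ Set.univ (fun y => ψbd y - β / 2 * ‖y‖ ^ 2))
    (hψd_conj : ∀ x, IsLUB (Set.range fun y => ⟪y, x⟫ - ψbd y) (ψd x))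
    (lam : ℝ)
    (hint1 : Integrable (fun x => ⟪x, gradient ψdag x⟫ - ψbd (gradient ψdag x)) P)
    (hint2 : Integrable (fun x => ‖gradient ψbd (gradient ψdag x) - x‖ ^ 2) P)
    (hint3 : Integrable ψd P) :
    (∫ x, (⟪x, gradient ψdag x⟫ - ψbd (gradient ψdag x)) ∂P)
      + lam * ∫ x, ‖gradient ψbd (gradient ψdag x) - x‖ ^ 2 ∂P ≥
    (∫ x, ψd x ∂P)
      + (lam - B / (2 * β ^ 2)) * ∫ x, ‖gradient ψbd (gradient ψdag x) - x‖ ^ 2 ∂P := by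
  have hconst : 1 / (2 * β) ≤ B / (2 * β ^ 2) := by
    rw [div_le_div_iff₀ (by positivity) (by positivity)]
    nlinarith
  have hpointwise : ∀ x, ψd x ≤ (⟪x, gradient ψdag x⟫ - ψbd (gradient ψdag x))
      + B / (2 * β ^ 2) * ‖gradient ψbd (gradient ψdag x) - x‖ ^ 2 := fun x => by
    have h := (strongConvexOn_iff_convex.mpr hψbd_sconv).conjugate_le_of_isLUB hβ
      (hψbd_diff (gradient ψdag x)).hasGradientAt (hψd_conj x)
    calc ψd x ≤ _ := h
      _ ≤ _ := by rw [div_eq_mul_one_div, mul_comm]; gcongr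
  have hmono : ∫ x, ψd x ∂P ≤ ∫ x, ((⟪x, gradient ψdag x⟫ - ψbd (gradient ψdag x))
      + B / (2 * β ^ 2) * ‖gradient ψbd (gradient ψdag x) - x‖ ^ 2) ∂P :=
    integral_mono hint3 (hint1.add (hint2.const_mul _)) hpointwise
  rw [integral_add hint1 (hint2.const_mul _), integral_const_mul] at hmono
  linarith

/-- Integrated cycle-regularized lower bound (inequality (22)):
for a Borel probability measure `P`, `ψbd` differentiable convex, `β`-strongly
convex and `B`-smooth (`0 < β ≤ B`), with differentiable convex conjugate `ψd`
having `(1/β)`-Lipschitz gradient and mutually inverse gradients, any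
differentiable `ψdag`, and `λ > 0`,
`∫ [⟪x, ∇ψdag x⟫ − ψbd (∇ψdag x)] dP + λ ∫ ‖∇ψbd (∇ψdag x) − x‖² dP
  ≥ ∫ ψd dP + (λ − B/(2β²)) ∫ ‖∇ψbd (∇ψdag x) − x‖² dP`. -/
theorem integrated_cycle_regularized_lower_bound {D : ℕ}
    (P : Measure (EuclideanSpace ℝ (Fin D))) [IsProbabilityMeasure P]
    (β B : ℝ) (hβ : 0 < β) (hβB : β ≤ B)
    (ψbd ψd ψdag : EuclideanSpace ℝ (Fin D) → ℝ)
    (hψbd_conv : ConvexOn ℝ Set.univ ψbd)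
    (hψbd_diff : Differentiable ℝ ψbd)
    (hψbd_sconv : ConvexOn ℝ Set.univ (fun y => ψbd y - β / 2 * ‖y‖ ^ 2))
    (hψbd_smooth : ∀ x y, ‖gradient ψbd x - gradient ψbd y‖ ≤ B * ‖x - y‖)
    (hψd_diff : Differentiable ℝ ψd)
    (hψd_conj : ∀ x, IsLUB (Set.range fun y => ⟪y, x⟫ - ψbd y) (ψd x))
    (hψd_lip : ∀ x y, ‖gradient ψd x - gradient ψd y‖ ≤ (1 / β) * ‖x - y‖)
    (hinv1 : ∀ x, gradient ψbd (gradient ψd x) = x)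
    (hinv2 : ∀ y, gradient ψd (gradient ψbd y) = y)
    (hψdag_diff : Differentiable ℝ ψdag)
    (lam : ℝ) (hlam : 0 < lam)
    (hint1 : Integrable (fun x => ⟪x, gradient ψdag x⟫ - ψbd (gradient ψdag x)) P)
    (hint2 : Integrable (fun x => ‖gradient ψbd (gradient ψdag x) - x‖ ^ 2) P)
    (hint3 : Integrable ψd P) :
    (∫ x, (⟪x, gradient ψdag x⟫ - ψbd (gradient ψdag x)) ∂P)
      + lam * ∫ x, ‖gradient ψbd (gradient ψdag x) - x‖ ^ 2 ∂P ≥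
    (∫ x, ψd x ∂P)
      + (lam - B / (2 * β ^ 2)) * ∫ x, ‖gradient ψbd (gradient ψdag x) - x‖ ^ 2 ∂P :=
  integrated_cycle_regularized_lower_bound_general P β B hβ hβB ψbd ψd ψdag hψbd_diff hψbd_sconv
    hψd_conj lam hint1 hint2 hint3
end

section
/- Twin conclusions (30) in the proof of Theorem 2. Under the hypotheses of Theorem 2 (optimal congruent potentials {ψₙ*}; ψₙ† differentiable convex; ψ̄ₙ‡ β-strongly convex and B-smooth differentiable convex with 0 < β ≤ B < ∞ and differentiable conjugates ψₙ‡ with mutually inverse gradients; λ > B/(2β²); τ ≥ 1 with P̄ ≤ τ·P̂ setwise), let Δ = M − Σₙ αₙ ∫ ψₙ* dPₙ where M is the regularized objective. Then for every n ∈ {1,…,N}: (i) ∫ ‖∇ψₙ*(x) − ∇ψₙ‡(x)‖² dPₙ(x) ≤ 2Δ/(αₙβ), and (ii) ∫ ‖∇ψ̄ₙ‡(∇ψₙ†(x)) − x‖² dPₙ(x) ≤ 2Δ/(αₙ(λ − B/(2β²))). -/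
/-!
Fix `n` and `x`, and put `z = ∇ψₙ* x`, `w = ∇ψₙ‡ x`, `y = ∇ψₙ† x`. The Fenchel equalities
`ψ̄ₙ*(z) = ⟪x, z⟫ - ψₙ*(x)` and `ψₙ‡(x) = ⟪w, x⟫ - ψ̄ₙ‡(w)`, together with the two first-order
bounds for the `β`-strongly convex `ψ̄ₙ‡` (a quadratic lower bound at `z`, and the upper Bregman
bound `‖∇ψ̄ₙ‡ y - x‖² / (2β)` at `y`), give
`ψ̄ₙ*(z) - ψ̄ₙ‡(z) + β/2 ‖z - w‖² ≤ ⟪x, y⟫ - ψ̄ₙ‡(y) + ‖∇ψ̄ₙ‡ y - x‖² / (2β) - ψₙ*(x)`.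
Transport the left side to `P̄` along `∇ψₙ*` (inverted by `∇ψ̄ₙ*`) and sum with weights `αₙ`:
congruence turns it into `‖u‖²/2 - Σ αₙ ψ̄ₙ‡(u) ≥ -[Σ αₙ ψ̄ₙ‡(u) - ‖u‖²/2]₊`, and `P̄ ≤ τ P̂`
bounds the integral of the positive part. As `1/(2β) ≤ B/(2β²)`, this shows
`Σ αₙ (β/2 ∫‖∇ψₙ* - ∇ψₙ‡‖² + (λ - B/(2β²)) ∫‖∇ψ̄ₙ‡ ∘ ∇ψₙ† - id‖²) ≤ Δ`,
and each summand is nonnegative.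
-/

open MeasureTheory RealInnerProductSpace

section FirstOrder

variable {E : Type*} [NormedAddCommGroup E] [NormedSpace ℝ E] {s : Set E} {f : E → ℝ} {x y : E}

theorem ConvexOn.add_fderiv_sub_le {f' : E →L[ℝ] ℝ} (hf : ConvexOn ℝ s f) (hx : x ∈ s)
    (hy : y ∈ s) (hf' : HasFDerivAt f f' x) : f x + f' (y - x) ≤ f y := by
  have hline : HasDerivAt (f ∘ AffineMap.lineMap (k := ℝ) x y) (f' (y - x)) 0 :=
    (AffineMap.lineMap_apply_zero (k := ℝ) x y ▸ hf').comp_hasDerivAt 0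
      AffineMap.hasDerivAt_lineMap
  have hslope := (hf.comp_affineMap (AffineMap.lineMap x y)).le_slope_of_hasDerivAt
    (by simpa using hx) (by simpa using hy) one_pos hline
  simp only [map_sub, slope_def_field, Function.comp_apply, AffineMap.lineMap_apply_one,
    AffineMap.lineMap_apply_zero, sub_zero, div_one] at hslope
  rw [map_sub]
  linarith

end FirstOrder

section Gradient

variable {E : Type*} [NormedAddCommGroup E] [InnerProductSpace ℝ E] [CompleteSpace E]
  {s : Set E} {f : E → ℝ} {g g' x y : E} {m : ℝ}

theorem ConvexOn.add_inner_sub_le (hf : ConvexOn ℝ s f) (hx : x ∈ s) (hy : y ∈ s)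
    (hg : HasGradientAt f g x) : f x + ⟪g, y - x⟫ ≤ f y := by
  simpa using hf.add_fderiv_sub_le hx hy hg.hasFDerivAt

theorem StrongConvexOn.add_inner_sub_add_sq_le (hf : StrongConvexOn s m f) (hx : x ∈ s)
    (hy : y ∈ s) (hg : HasGradientAt f g x) :
    f x + ⟪g, y - x⟫ + m / 2 * ‖y - x‖ ^ 2 ≤ f y := by
  have hconv := (strongConvexOn_iff_convex.1 hf).add_fderiv_sub_le hx hy
    (hg.hasFDerivAt.sub ((hasStrictFDerivAt_norm_sq x).hasFDerivAt.const_mul (m / 2)))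
  simp only [sub_apply, smul_apply, InnerProductSpace.toDual_apply_apply, innerSL_apply_apply,
    smul_eq_mul, nsmul_eq_mul, Nat.cast_ofNat, inner_sub_right, real_inner_self_eq_norm_sq]
    at hconv
  rw [norm_sub_sq_real, inner_sub_right, real_inner_comm x y]
  linarith

theorem StrongConvexOn.sub_sub_inner_le (hm : 0 < m) (hf : StrongConvexOn s m f) (hx : x ∈ s)
    (hy : y ∈ s) (hgy : HasGradientAt f g' y) (g : E) :
    f y - f x - ⟪g, y - x⟫ ≤ ‖g' - g‖ ^ 2 / (2 * m) := by
  have hfirst := hf.add_inner_sub_add_sq_le hy hx hgy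
  have hcs : ⟪g' - g, y - x⟫ ≤ ‖g' - g‖ * ‖y - x‖ := real_inner_le_norm _ _
  have hamgm : ‖g' - g‖ * ‖y - x‖ ≤ ‖g' - g‖ ^ 2 / (2 * m) + m / 2 * ‖y - x‖ ^ 2 := by
    rw [div_add' _ _ _ (by positivity), le_div_iff₀ (by positivity)]
    nlinarith [sq_nonneg (‖g' - g‖ - m * ‖y - x‖)]
  rw [inner_sub_left] at hcs
  rw [norm_sub_rev, ← neg_sub y x, inner_neg_right] at hfirst
  linarith

theorem ConvexOn.eq_inner_sub_of_isLUB (hf : ConvexOn ℝ Set.univ f) (hg : HasGradientAt f g x)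
    {a : ℝ} (ha : IsLUB (Set.range fun v => ⟪v, g⟫ - f v) a) : a = ⟪x, g⟫ - f x := by
  refine ha.unique (IsGreatest.isLUB ⟨⟨x, rfl⟩, ?_⟩)
  rintro _ ⟨v, rfl⟩
  have hfirst := hf.add_inner_sub_le trivial trivial hg (y := v)
  rw [inner_sub_right] at hfirst
  show ⟪v, g⟫ - f v ≤ _
  rw [real_inner_comm g v, real_inner_comm g x]
  linarith

theorem StrongConvexOn.inner_sub_add_sq_le (hm : 0 ≤ m) (hf : StrongConvexOn Set.univ m f)
    (hx : HasGradientAt f g x) {a : ℝ} (ha : IsLUB (Set.range fun v => ⟪v, g⟫ - f v) a) (z : E) :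
    ⟪z, g⟫ - a + m / 2 * ‖z - x‖ ^ 2 ≤ f z := by
  have hconv : ConvexOn ℝ Set.univ f := hf.convexOn fun r => by positivity
  rw [hconv.eq_inner_sub_of_isLUB hx ha]
  have hfirst := hf.add_inner_sub_add_sq_le trivial trivial hx (y := z)
  rw [inner_sub_right] at hfirst
  rw [real_inner_comm g z, real_inner_comm g x]
  linarith

theorem StrongConvexOn.le_inner_sub_add_sq (hm : 0 < m) (hf : StrongConvexOn Set.univ m f)
    (hx : HasGradientAt f g x) (hy : HasGradientAt f g' y) {a : ℝ}
    (ha : IsLUB (Set.range fun v => ⟪v, g⟫ - f v) a) :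
    a ≤ ⟪y, g⟫ - f y + ‖g' - g‖ ^ 2 / (2 * m) := by
  have hconv : ConvexOn ℝ Set.univ f := hf.convexOn fun r => by positivity
  rw [hconv.eq_inner_sub_of_isLUB hx ha]
  have hbregman := hf.sub_sub_inner_le hm (x := x) trivial trivial hy g
  rw [inner_sub_right] at hbregman
  rw [real_inner_comm g y, real_inner_comm g x]
  linarith

theorem conj_sub_conj_add_sq_le {ψ ψbar φ φbar : E → ℝ} {β : ℝ} (hβ : 0 < β)
    (hψ : ConvexOn ℝ Set.univ ψ) (hψ_diff : Differentiable ℝ ψ)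
    (hψbar : IsLUB (Set.range fun v => ⟪v, gradient ψ x⟫ - ψ v) (ψbar (gradient ψ x)))
    (hφbar : StrongConvexOn Set.univ β φbar) (hφbar_diff : Differentiable ℝ φbar)
    (hφ : IsLUB (Set.range fun v => ⟪v, x⟫ - φbar v) (φ x)) {w : E} (hw : gradient φbar w = x)
    (y : E) :
    ψbar (gradient ψ x) - φbar (gradient ψ x) + β / 2 * ‖gradient ψ x - w‖ ^ 2 ≤
      ⟪x, y⟫ - φbar y + ‖gradient φbar y - x‖ ^ 2 / (2 * β) - ψ x := by
  have hφbar_w : HasGradientAt φbar x w := hw ▸ (hφbar_diff w).hasGradientAt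
  have hψbar_eq := hψ.eq_inner_sub_of_isLUB (hψ_diff x).hasGradientAt hψbar
  have hlower := hφbar.inner_sub_add_sq_le hβ.le hφbar_w hφ (gradient ψ x)
  have hupper := hφbar.le_inner_sub_add_sq hβ hφbar_w (hφbar_diff y).hasGradientAt hφ
  rw [real_inner_comm] at hlower hupper
  linarith

end Gradient

section Pushforward

variable {X Y : Type*} [MeasurableSpace X] [MeasurableSpace Y] {μ : Measure X} {φ : X → Y}
  {χ : Y → X}

theorem MeasureTheory.Measure.map_map_of_leftInverse (hφ : Measurable φ) (hχ : Measurable χ)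
    (h : Function.LeftInverse χ φ) : (μ.map φ).map χ = μ := by
  rw [Measure.map_map hχ hφ, h.comp_eq_id, Measure.map_id]

theorem MeasureTheory.Integrable.comp_of_leftInverse (hφ : Measurable φ) (hχ : Measurable χ)
    (h : Function.LeftInverse χ φ) {g : X → ℝ} (hg : Integrable g μ) :
    Integrable (fun y => g (χ y)) (μ.map φ) := by
  rw [← Measure.map_map_of_leftInverse (μ := μ) hφ hχ h] at hg
  exact hg.comp_measurable hχ

theorem MeasureTheory.integral_comp_of_leftInverse (hφ : Measurable φ) (hχ : Measurable χ)
    (h : Function.LeftInverse χ φ) {g : X → ℝ} (hg : AEStronglyMeasurable g μ) :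
    ∫ y, g (χ y) ∂(μ.map φ) = ∫ x, g x ∂μ := by
  rw [← integral_map hχ.aemeasurable, Measure.map_map_of_leftInverse hφ hχ h]
  rwa [Measure.map_map_of_leftInverse hφ hχ h]

theorem MeasureTheory.ae_map_eq_of_leftInverse [MeasurableEq Y] (hφ : Measurable φ)
    (hχ : Measurable χ) (h : Function.LeftInverse χ φ) : ∀ᵐ y ∂(μ.map φ), φ (χ y) = y :=
  (ae_map_iff hφ.aemeasurable (measurableSet_eq_fun (hφ.comp hχ) measurable_id)).2
    (Filter.Eventually.of_forall fun x => congrArg φ (h x))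

theorem MeasureTheory.integral_le_sum_integral_of_map_eq {ι : Type*} [Fintype ι] [MeasurableEq Y]
    {ν : Measure Y} {μ : ι → Measure X} {φ : ι → X → Y} {χ : ι → Y → X}
    (hφ : ∀ i, Measurable (φ i)) (hχ : ∀ i, Measurable (χ i))
    (hinv : ∀ i, Function.LeftInverse (χ i) (φ i)) (hν : ∀ i, (μ i).map (φ i) = ν)
    {w : ι → ℝ} (hw : ∀ i, 0 ≤ w i) {G : Y → ℝ} {F : ι → Y → ℝ} {A : ι → X → ℝ}
    (hGF : ∀ y, G y ≤ ∑ i, w i * F i y) (hFA : ∀ i x, F i (φ i x) ≤ A i x)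
    (hG : Integrable G ν) (hA : ∀ i, Integrable (A i) (μ i)) :
    ∫ y, G y ∂ν ≤ ∑ i, w i * ∫ x, A i x ∂(μ i) := by
  have hAχ : ∀ i, Integrable (fun y => A i (χ i y)) ν := fun i =>
    hν i ▸ (hA i).comp_of_leftInverse (hφ i) (hχ i) (hinv i)
  have hae : ∀ᵐ y ∂ν, ∀ i, φ i (χ i y) = y :=
    ae_all_iff.2 fun i => hν i ▸ ae_map_eq_of_leftInverse (hφ i) (hχ i) (hinv i)
  calc ∫ y, G y ∂ν ≤ ∫ y, ∑ i, w i * A i (χ i y) ∂ν := by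
        refine integral_mono_ae hG (integrable_finsetSum _ fun i _ => (hAχ i).const_mul _) ?_
        filter_upwards [hae] with y hy
        refine (hGF y).trans (Finset.sum_le_sum fun i _ => ?_)
        exact mul_le_mul_of_nonneg_left (by simpa only [hy i] using hFA i (χ i y)) (hw i)
    _ = ∑ i, w i * ∫ x, A i x ∂(μ i) := by
        rw [integral_finsetSum _ fun i _ => (hAχ i).const_mul (w i)]
        refine Finset.sum_congr rfl fun i _ => ?_
        rw [integral_const_mul, ← hν i,
          integral_comp_of_leftInverse (hφ i) (hχ i) (hinv i) (hA i).aestronglyMeasurable]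

theorem MeasureTheory.integral_le_mul_integral_of_le_smul {μ ν : Measure Y} {c : ℝ}
    (hc : 0 ≤ c) (hμν : μ ≤ ENNReal.ofReal c • ν) {f : Y → ℝ} (hf : 0 ≤ f)
    (hfi : Integrable f ν) : ∫ y, f y ∂μ ≤ c * ∫ y, f y ∂ν := by
  have hmono := integral_mono_measure hμν (Filter.Eventually.of_forall hf)
    (hfi.smul_measure ENNReal.ofReal_ne_top)
  rwa [integral_smul_measure, ENNReal.toReal_ofReal hc, smul_eq_mul] at hmono

end Pushforward

theorem le_div_and_le_div_of_sum_le {ι : Type*} [Fintype ι] {w a b : ι → ℝ} {p q Δ : ℝ}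
    (hw : ∀ i, 0 < w i) (ha : ∀ i, 0 ≤ a i) (hb : ∀ i, 0 ≤ b i) (hp : 0 < p) (hq : 0 < q)
    (h : ∑ i, w i * (p / 2 * a i) + q * ∑ i, w i * b i ≤ Δ) (i : ι) :
    a i ≤ 2 * Δ / (w i * p) ∧ b i ≤ 2 * Δ / (w i * q) := by
  have hwa := Finset.single_le_sum (fun j _ => mul_nonneg (hw j).le (mul_nonneg (half_pos hp).le
    (ha j))) (Finset.mem_univ i)
  have hwb := Finset.single_le_sum (fun j _ => mul_nonneg (hw j).le (hb j)) (Finset.mem_univ i)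
  have hwa0 : 0 ≤ w i * a i := mul_nonneg (hw i).le (ha i)
  have hwb0 : 0 ≤ w i * b i := mul_nonneg (hw i).le (hb i)
  constructor
  · rw [le_div_iff₀ (mul_pos (hw i) hp)]
    nlinarith
  · rw [le_div_iff₀ (mul_pos (hw i) hq)]
    nlinarith

section Barycenter

variable {E : Type*} [NormedAddCommGroup E] [InnerProductSpace ℝ E] [CompleteSpace E]
  [MeasurableSpace E] [BorelSpace E]

theorem measurable_gradient_s13 (f : E → ℝ) : Measurable (gradient f) :=
  (InnerProductSpace.toDual ℝ E).symm.continuous.measurable.comp (measurable_fderiv ℝ f)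

theorem sum_integral_sq_gradient_sub_le [MeasurableEq E] {ι : Type*} [Fintype ι]
    {P : ι → Measure E} {Pbar Phat : Measure E} {α : ι → ℝ} (hα : ∀ i, 0 ≤ α i)
    {ψs ψbs ψdag ψbd ψd : ι → E → ℝ} {β c τ : ℝ} (hβ : 0 < β) (hc : 1 / (2 * β) ≤ c)
    (hτ : 0 ≤ τ)
    (hψs_conv : ∀ i, ConvexOn ℝ Set.univ (ψs i)) (hψs_diff : ∀ i, Differentiable ℝ (ψs i))
    (hψbs_conj : ∀ i y, IsLUB (Set.range fun x => ⟪x, y⟫ - ψs i x) (ψbs i y))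
    (hpush : ∀ i, (P i).map (gradient (ψs i)) = Pbar)
    (hsinv : ∀ i x, gradient (ψbs i) (gradient (ψs i) x) = x)
    (hcong : ∀ y, ∑ i, α i * ψbs i y = ‖y‖ ^ 2 / 2)
    (hψbd : ∀ i, StrongConvexOn Set.univ β (ψbd i)) (hψbd_diff : ∀ i, Differentiable ℝ (ψbd i))
    (hψd_conj : ∀ i x, IsLUB (Set.range fun y => ⟪y, x⟫ - ψbd i y) (ψd i x))
    (hinv : ∀ i x, gradient (ψbd i) (gradient (ψd i) x) = x)
    (hdom : Pbar ≤ ENNReal.ofReal τ • Phat)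
    (hint_obj : ∀ i, Integrable
      (fun x => ⟪x, gradient (ψdag i) x⟫ - ψbd i (gradient (ψdag i) x)) (P i))
    (hint_pos : Integrable (fun y => max (∑ i, α i * ψbd i y - ‖y‖ ^ 2 / 2) 0) Phat)
    (hint_cyc : ∀ i, Integrable
      (fun x => ‖gradient (ψbd i) (gradient (ψdag i) x) - x‖ ^ 2) (P i))
    (hint_s : ∀ i, Integrable (ψs i) (P i))
    (hint_sd : ∀ i, Integrable
      (fun x => ‖gradient (ψs i) x - gradient (ψd i) x‖ ^ 2) (P i)) :
    ∑ i, α i * (β / 2 * ∫ x, ‖gradient (ψs i) x - gradient (ψd i) x‖ ^ 2 ∂(P i)) ≤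
      (∑ i, α i * ∫ x, (⟪x, gradient (ψdag i) x⟫ - ψbd i (gradient (ψdag i) x)) ∂(P i))
        + τ * ∫ y, max (∑ i, α i * ψbd i y - ‖y‖ ^ 2 / 2) 0 ∂Phat
        + c * ∑ i, α i * ∫ x, ‖gradient (ψbd i) (gradient (ψdag i) x) - x‖ ^ 2 ∂(P i)
        - ∑ i, α i * ∫ x, ψs i x ∂(P i) := by
  let A : ι → E → ℝ := fun i x => (⟪x, gradient (ψdag i) x⟫ - ψbd i (gradient (ψdag i) x))
    + c * ‖gradient (ψbd i) (gradient (ψdag i) x) - x‖ ^ 2 - ψs i x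
    - β / 2 * ‖gradient (ψs i) x - gradient (ψd i) x‖ ^ 2
  have hFA : ∀ i x, ψbs i (gradient (ψs i) x) - ψbd i (gradient (ψs i) x) ≤ A i x := by
    intro i x
    have hgap := conj_sub_conj_add_sq_le hβ (hψs_conv i) (hψs_diff i) (hψbs_conj i _) (hψbd i)
      (hψbd_diff i) (hψd_conj i x) (hinv i x) (gradient (ψdag i) x)
    have hslack : ‖gradient (ψbd i) (gradient (ψdag i) x) - x‖ ^ 2 / (2 * β) ≤
        c * ‖gradient (ψbd i) (gradient (ψdag i) x) - x‖ ^ 2 := by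
      rw [div_eq_mul_one_div, mul_comm]
      exact mul_le_mul_of_nonneg_right hc (sq_nonneg _)
    simp only [A]
    linarith
  have hG : ∀ y, -max (∑ i, α i * ψbd i y - ‖y‖ ^ 2 / 2) 0 ≤
      ∑ i, α i * (ψbs i y - ψbd i y) := by
    intro y
    simp only [mul_sub, Finset.sum_sub_distrib, hcong]
    linarith [le_max_left (∑ i, α i * ψbd i y - ‖y‖ ^ 2 / 2) 0]
  have hAint : ∀ i, Integrable (A i) (P i) := fun i =>
    (((hint_obj i).add ((hint_cyc i).const_mul c)).sub (hint_s i)).sub ((hint_sd i).const_mul _)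
  have hAeq : ∀ i, ∫ x, A i x ∂(P i) =
      (∫ x, (⟪x, gradient (ψdag i) x⟫ - ψbd i (gradient (ψdag i) x)) ∂(P i))
        + c * (∫ x, ‖gradient (ψbd i) (gradient (ψdag i) x) - x‖ ^ 2 ∂(P i))
        - (∫ x, ψs i x ∂(P i))
        - β / 2 * (∫ x, ‖gradient (ψs i) x - gradient (ψd i) x‖ ^ 2 ∂(P i)) := by
    intro i
    have hobj_cyc := (hint_obj i).add ((hint_cyc i).const_mul c)
    rw [integral_sub (by exact hobj_cyc.sub (hint_s i)) (by exact (hint_sd i).const_mul _),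
      integral_sub (by exact hobj_cyc) (hint_s i),
      integral_add (hint_obj i) ((hint_cyc i).const_mul c), integral_const_mul, integral_const_mul]
  have htransport := integral_le_sum_integral_of_map_eq (fun i => measurable_gradient_s13 (ψs i))
    (fun i => measurable_gradient_s13 (ψbs i)) hsinv hpush hα hG hFA
    ((hint_pos.smul_measure ENNReal.ofReal_ne_top).mono_measure hdom).neg hAint
  have hbound := integral_le_mul_integral_of_le_smul hτ hdom
    (f := fun y => max (∑ i, α i * ψbd i y - ‖y‖ ^ 2 / 2) 0) (fun y => le_max_right _ _) hint_pos
  have hsum : ∑ i, α i * ∫ x, A i x ∂(P i) =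
      (∑ i, α i * ∫ x, (⟪x, gradient (ψdag i) x⟫ - ψbd i (gradient (ψdag i) x)) ∂(P i))
        + c * ∑ i, α i * ∫ x, ‖gradient (ψbd i) (gradient (ψdag i) x) - x‖ ^ 2 ∂(P i)
        - ∑ i, α i * ∫ x, ψs i x ∂(P i)
        - ∑ i, α i * (β / 2 * ∫ x, ‖gradient (ψs i) x - gradient (ψd i) x‖ ^ 2 ∂(P i)) := by
    simp only [hAeq, Finset.mul_sum, ← Finset.sum_add_distrib, ← Finset.sum_sub_distrib]
    exact Finset.sum_congr rfl fun i _ => by ring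
  rw [integral_neg] at htransport
  linarith

end Barycenter

theorem theorem2_twin_conclusions_general {D N : ℕ}
    (P : Fin N → Measure (EuclideanSpace ℝ (Fin D)))
    (Pbar : Measure (EuclideanSpace ℝ (Fin D)))
    (α : Fin N → ℝ) (hα : ∀ n, 0 < α n)
    -- optimal congruent potentials ψₙ* with conjugates ψ̄ₙ*
    (ψs ψbs : Fin N → EuclideanSpace ℝ (Fin D) → ℝ)
    (hψs_conv : ∀ n, ConvexOn ℝ Set.univ (ψs n))
    (hψs_diff : ∀ n, Differentiable ℝ (ψs n))
    (hψbs_conj : ∀ n y, IsLUB (Set.range fun x => ⟪x, y⟫ - ψs n x) (ψbs n y))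
    (hpush : ∀ n, (P n).map (gradient (ψs n)) = Pbar)
    (hsinv : ∀ n x, gradient (ψbs n) (gradient (ψs n) x) = x)
    (hcong : ∀ y, ∑ n, α n * ψbs n y = ‖y‖ ^ 2 / 2)
    -- candidate potentials ψₙ† and ψ̄ₙ‡ with conjugates ψₙ‡
    (β B : ℝ) (hβ : 0 < β) (hβB : β ≤ B)
    (ψdag ψbd ψd : Fin N → EuclideanSpace ℝ (Fin D) → ℝ)
    (hψbd_diff : ∀ n, Differentiable ℝ (ψbd n))
    (hψbd_sconv : ∀ n, ConvexOn ℝ Set.univ (fun y => ψbd n y - β / 2 * ‖y‖ ^ 2))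
    (hψd_conj : ∀ n x, IsLUB (Set.range fun y => ⟪y, x⟫ - ψbd n y) (ψd n x))
    (hinv1 : ∀ n x, gradient (ψbd n) (gradient (ψd n) x) = x)
    -- regularization parameters
    (lam : ℝ) (hlam : lam > B / (2 * β ^ 2))
    (τ : ℝ) (hτ : 1 ≤ τ)
    (Phat : Measure (EuclideanSpace ℝ (Fin D)))
    (hdom : ∀ A : Set (EuclideanSpace ℝ (Fin D)), MeasurableSet A →
      Pbar A ≤ ENNReal.ofReal τ * Phat A)
    -- integrability of the stated integrals
    (hintM1 : ∀ n, Integrable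
      (fun x => ⟪x, gradient (ψdag n) x⟫ - ψbd n (gradient (ψdag n) x)) (P n))
    (hintM2 : Integrable (fun y => max (∑ n, α n * ψbd n y - ‖y‖ ^ 2 / 2) 0) Phat)
    (hintM3 : ∀ n, Integrable
      (fun x => ‖gradient (ψbd n) (gradient (ψdag n) x) - x‖ ^ 2) (P n))
    (hint_s : ∀ n, Integrable (ψs n) (P n))
    -- the regularized objective
    (M : ℝ)
    (hM : M = (∑ n, α n * ∫ x, (⟪x, gradient (ψdag n) x⟫
          - ψbd n (gradient (ψdag n) x)) ∂(P n))
      + τ * ∫ y, max (∑ n, α n * ψbd n y - ‖y‖ ^ 2 / 2) 0 ∂Phat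
      + lam * ∑ n, α n * ∫ x, ‖gradient (ψbd n) (gradient (ψdag n) x) - x‖ ^ 2 ∂(P n))
    (hint_sd : ∀ n, Integrable
      (fun x => ‖gradient (ψs n) x - gradient (ψd n) x‖ ^ 2) (P n))
    (Δ : ℝ) (hΔ : Δ = M - ∑ n, α n * ∫ x, ψs n x ∂(P n)) :
    ∀ n, (∫ x, ‖gradient (ψs n) x - gradient (ψd n) x‖ ^ 2 ∂(P n) ≤
        2 * Δ / (α n * β)) ∧
      (∫ x, ‖gradient (ψbd n) (gradient (ψdag n) x) - x‖ ^ 2 ∂(P n) ≤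
        2 * Δ / (α n * (lam - B / (2 * β ^ 2)))) := by
  have hc : 1 / (2 * β) ≤ B / (2 * β ^ 2) := by
    rw [div_le_div_iff₀ (by positivity) (by positivity)]
    nlinarith
  have hdom' : Pbar ≤ ENNReal.ofReal τ • Phat :=
    Measure.le_iff.2 fun s hs => by simpa using hdom s hs
  have hgap := sum_integral_sq_gradient_sub_le (fun n => (hα n).le) hβ hc (by linarith)
    hψs_conv hψs_diff hψbs_conj hpush hsinv hcong
    (fun n => strongConvexOn_iff_convex.2 (hψbd_sconv n)) hψbd_diff hψd_conj hinv1 hdom'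
    hintM1 hintM2 hintM3 hint_s hint_sd
  refine le_div_and_le_div_of_sum_le hα (fun n => integral_nonneg fun x => sq_nonneg _)
    (fun n => integral_nonneg fun x => sq_nonneg _) hβ (sub_pos.2 hlam) ?_
  rw [hΔ, hM]
  linarith

/-- Twin conclusions (30) in the proof of Theorem 2: with
`Δ = M − Σₙ αₙ ∫ ψₙ* dPₙ`, for every `n`,
(i) `∫ ‖∇ψₙ*(x) − ∇ψₙ‡(x)‖² dPₙ ≤ 2Δ/(αₙβ)` and
(ii) `∫ ‖∇ψ̄ₙ‡(∇ψₙ†(x)) − x‖² dPₙ ≤ 2Δ/(αₙ(λ − B/(2β²)))`. -/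
theorem theorem2_twin_conclusions {D N : ℕ}
    (P : Fin N → Measure (EuclideanSpace ℝ (Fin D)))
    (Pbar : Measure (EuclideanSpace ℝ (Fin D)))
    [∀ n, IsProbabilityMeasure (P n)] [IsProbabilityMeasure Pbar]
    (α : Fin N → ℝ) (hα : ∀ n, 0 < α n) (hαsum : ∑ n, α n = 1)
    -- optimal congruent potentials ψₙ* with conjugates ψ̄ₙ*
    (ψs ψbs : Fin N → EuclideanSpace ℝ (Fin D) → ℝ)
    (hψs_conv : ∀ n, ConvexOn ℝ Set.univ (ψs n))
    (hψs_diff : ∀ n, Differentiable ℝ (ψs n))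
    (hψbs_diff : ∀ n, Differentiable ℝ (ψbs n))
    (hψbs_conj : ∀ n y, IsLUB (Set.range fun x => ⟪x, y⟫ - ψs n x) (ψbs n y))
    (hpush : ∀ n, (P n).map (gradient (ψs n)) = Pbar)
    (hsinv : ∀ n x, gradient (ψbs n) (gradient (ψs n) x) = x)
    (hcong : ∀ y, ∑ n, α n * ψbs n y = ‖y‖ ^ 2 / 2)
    (hcongGrad : ∀ y, ∑ n, α n • gradient (ψbs n) y = y)
    -- candidate potentials ψₙ† and ψ̄ₙ‡ with conjugates ψₙ‡
    (β B : ℝ) (hβ : 0 < β) (hβB : β ≤ B)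
    (ψdag ψbd ψd : Fin N → EuclideanSpace ℝ (Fin D) → ℝ)
    (hψdag_conv : ∀ n, ConvexOn ℝ Set.univ (ψdag n))
    (hψdag_diff : ∀ n, Differentiable ℝ (ψdag n))
    (hψbd_conv : ∀ n, ConvexOn ℝ Set.univ (ψbd n))
    (hψbd_diff : ∀ n, Differentiable ℝ (ψbd n))
    (hψbd_sconv : ∀ n, ConvexOn ℝ Set.univ (fun y => ψbd n y - β / 2 * ‖y‖ ^ 2))
    (hψbd_smooth : ∀ n x y, ‖gradient (ψbd n) x - gradient (ψbd n) y‖ ≤ B * ‖x - y‖)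
    (hψd_diff : ∀ n, Differentiable ℝ (ψd n))
    (hψd_conj : ∀ n x, IsLUB (Set.range fun y => ⟪y, x⟫ - ψbd n y) (ψd n x))
    (hψd_lip : ∀ n x y, ‖gradient (ψd n) x - gradient (ψd n) y‖ ≤ (1 / β) * ‖x - y‖)
    (hinv1 : ∀ n x, gradient (ψbd n) (gradient (ψd n) x) = x)
    (hinv2 : ∀ n y, gradient (ψd n) (gradient (ψbd n) y) = y)
    -- regularization parameters
    (lam : ℝ) (hlam : lam > B / (2 * β ^ 2))
    (τ : ℝ) (hτ : 1 ≤ τ)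
    (Phat : Measure (EuclideanSpace ℝ (Fin D))) [IsProbabilityMeasure Phat]
    (hdom : ∀ A : Set (EuclideanSpace ℝ (Fin D)), MeasurableSet A →
      Pbar A ≤ ENNReal.ofReal τ * Phat A)
    -- integrability of the stated integrals
    (hintM1 : ∀ n, Integrable
      (fun x => ⟪x, gradient (ψdag n) x⟫ - ψbd n (gradient (ψdag n) x)) (P n))
    (hintM2 : Integrable (fun y => max (∑ n, α n * ψbd n y - ‖y‖ ^ 2 / 2) 0) Phat)
    (hintM3 : ∀ n, Integrable
      (fun x => ‖gradient (ψbd n) (gradient (ψdag n) x) - x‖ ^ 2) (P n))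
    (hint_s : ∀ n, Integrable (ψs n) (P n))
    -- the regularized objective
    (M : ℝ)
    (hM : M = (∑ n, α n * ∫ x, (⟪x, gradient (ψdag n) x⟫
          - ψbd n (gradient (ψdag n) x)) ∂(P n))
      + τ * ∫ y, max (∑ n, α n * ψbd n y - ‖y‖ ^ 2 / 2) 0 ∂Phat
      + lam * ∑ n, α n * ∫ x, ‖gradient (ψbd n) (gradient (ψdag n) x) - x‖ ^ 2 ∂(P n))
    (hint_sd : ∀ n, Integrable
      (fun x => ‖gradient (ψs n) x - gradient (ψd n) x‖ ^ 2) (P n))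
    (Δ : ℝ) (hΔ : Δ = M - ∑ n, α n * ∫ x, ψs n x ∂(P n)) :
    ∀ n, (∫ x, ‖gradient (ψs n) x - gradient (ψd n) x‖ ^ 2 ∂(P n) ≤
        2 * Δ / (α n * β)) ∧
      (∫ x, ‖gradient (ψbd n) (gradient (ψdag n) x) - x‖ ^ 2 ∂(P n) ≤
        2 * Δ / (α n * (lam - B / (2 * β ^ 2)))) :=
  theorem2_twin_conclusions_general P Pbar α hα ψs ψbs hψs_conv hψs_diff hψbs_conj hpush hsinv hcong
    β B hβ hβB ψdag ψbd ψd hψbd_diff hψbd_sconv hψd_conj hinv1 lam hlam τ hτ Phat hdom hintM1 hintM2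
    hintM3 hint_s M hM hint_sd Δ hΔ
end
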